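/- arXiv:1506.01047 — 2 statements merged into one kernel-verified Lean document; each statement's English description precedes it below -/
import Mathlib

section
/- Suppose the channel covariance matrices factor as Λ = Λ̃ ⊗ I_{N/A} with Λ̃ ∈ ℂ^{A×A} diagonal PSD, and Φ_N = Σ_m X_m ⊗ (Λ̃_m ⊗ I_{N/A}) + σ² I. Then for any x ∈ ℂ^B and diagonal D ∈ ℂ^{B×B}: tr((x^H D ⊗ (Λ̃ ⊗ I_{N/A})) Φ_N^{-1} (D^H x ⊗ (Λ̃ ⊗ I_{N/A}))) = (N/A) · tr((x^H D ⊗ Λ̃) Φ̃^{-1} (D^H x ⊗ Λ̃)), where Φ̃ = Σ_m X_m ⊗ Λ̃_m + σ² I_{AB}. -/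
/-!
Up to the reassociation `ℂ^B ⊗ (ℂ^A ⊗ ℂ^K) ≅ (ℂ^B ⊗ ℂ^A) ⊗ ℂ^K`, every factor in the trace is of
the form `P ⊗ I_K`; in particular `Φ_N = Φ̃ ⊗ I_K`, so `Φ_N⁻¹ = Φ̃⁻¹ ⊗ I_K`. The product inside
the trace is then `(…) ⊗ I_K`, and `tr (P ⊗ I_K) = K · tr P`.
-/

open Matrix Kronecker
open scoped ComplexOrder

/-- The row vector `x^H` as a `1 × B` matrix. -/
def rowVecH {B : ℕ} (x : Fin B → ℂ) : Matrix (Fin 1) (Fin B) ℂ :=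
  Matrix.of fun _ b => star (x b)

/-- The column vector `x` as a `B × 1` matrix. -/
def colVec {B : ℕ} (x : Fin B → ℂ) : Matrix (Fin B) (Fin 1) ℂ :=
  Matrix.of fun b _ => x b

namespace Matrix

variable {α : Type*} {p q k l n ι : Type*}

theorem trace_submatrix_equiv [AddCommMonoid α] [Fintype p] [Fintype q] (e : p ≃ q)
    (M : Matrix q q α) : trace (M.submatrix e e) = trace M :=
  e.sum_comp fun j => M j j

theorem trace_kronecker_one_mul_inv_mul [CommRing α] [Fintype p] [Fintype q] [DecidableEq q]
    [Fintype k] [DecidableEq k] (L : Matrix p q α) (Φ : Matrix q q α) (R : Matrix q p α) :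
    trace ((L ⊗ₖ (1 : Matrix k k α)) * (Φ ⊗ₖ (1 : Matrix k k α))⁻¹ * (R ⊗ₖ (1 : Matrix k k α)))
      = Fintype.card k * trace (L * Φ⁻¹ * R) := by
  rw [inv_kronecker, inv_one, ← mul_kronecker_mul, ← mul_kronecker_mul, mul_one, mul_one,
    trace_kronecker, trace_one, mul_comm]

theorem sum_kronecker_kronecker_one_add_smul_one [CommRing α] [Fintype ι] [DecidableEq l]
    [DecidableEq n] [DecidableEq k] (X : ι → Matrix l l α) (Y : ι → Matrix n n α) (c : α) :
    ∑ i, X i ⊗ₖ (Y i ⊗ₖ (1 : Matrix k k α)) + c • 1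
      = ((∑ i, X i ⊗ₖ Y i + c • 1) ⊗ₖ (1 : Matrix k k α)).submatrix
          (Equiv.prodAssoc l n k).symm (Equiv.prodAssoc l n k).symm := by
  ext ⟨i, j, s⟩ ⟨i', j', s'⟩
  by_cases h : s = s' <;> simp [h, sum_apply, one_apply]

end Matrix

theorem subarray_trace_scaling_general
    (B A K M : ℕ)
    (X : Fin M → Matrix (Fin B) (Fin B) ℂ)
    (lt : Fin A → ℝ)
    (ltm : Fin M → Fin A → ℝ)
    (σ : ℝ)
    (D : Matrix (Fin B) (Fin B) ℂ) (x : Fin B → ℂ) :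
    Matrix.trace
        (((rowVecH x * D) ⊗ₖ ((Matrix.diagonal fun a => (lt a : ℂ))
              ⊗ₖ (1 : Matrix (Fin K) (Fin K) ℂ)))
          * ((∑ m, X m ⊗ₖ ((Matrix.diagonal fun a => (ltm m a : ℂ))
                ⊗ₖ (1 : Matrix (Fin K) (Fin K) ℂ)))
              + (σ ^ 2 : ℂ) • (1 : Matrix (Fin B × Fin A × Fin K) (Fin B × Fin A × Fin K) ℂ))⁻¹
          * ((Dᴴ * colVec x) ⊗ₖ ((Matrix.diagonal fun a => (lt a : ℂ))
              ⊗ₖ (1 : Matrix (Fin K) (Fin K) ℂ))))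
      = (K : ℂ) * Matrix.trace
          (((rowVecH x * D) ⊗ₖ (Matrix.diagonal fun a => (lt a : ℂ)))
            * ((∑ m, X m ⊗ₖ (Matrix.diagonal fun a => (ltm m a : ℂ)))
                + (σ ^ 2 : ℂ) • (1 : Matrix (Fin B × Fin A) (Fin B × Fin A) ℂ))⁻¹
            * ((Dᴴ * colVec x) ⊗ₖ (Matrix.diagonal fun a => (lt a : ℂ)))) := by
  rw [sum_kronecker_kronecker_one_add_smul_one, ← kronecker_assoc' (rowVecH x * D),
    ← kronecker_assoc' (Dᴴ * colVec x), inv_submatrix_equiv, submatrix_mul_equiv,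
    submatrix_mul_equiv, trace_submatrix_equiv, trace_kronecker_one_mul_inv_mul, Fintype.card_fin]

/-- When the covariance matrices factor as `Λ̃ ⊗ I_{N/A}` (with `K = N/A` antennas per
subarray), the quadratic-form trace with the big matrix `Φ_N` equals `N/A` times the
corresponding trace with the reduced matrix `Φ̃`. -/
theorem subarray_trace_scaling
    (B A K M : ℕ) (hK : 0 < K)
    (X : Fin M → Matrix (Fin B) (Fin B) ℂ) (hX : ∀ m, (X m).PosSemidef)
    (lt : Fin A → ℝ) (hlt : ∀ a, 0 ≤ lt a)
    (ltm : Fin M → Fin A → ℝ) (hltm : ∀ m a, 0 ≤ ltm m a)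
    (σ : ℝ) (hσ : 0 < σ)
    (D : Matrix (Fin B) (Fin B) ℂ) (hD : D.IsDiag) (x : Fin B → ℂ) :
    Matrix.trace
        (((rowVecH x * D) ⊗ₖ ((Matrix.diagonal fun a => (lt a : ℂ))
              ⊗ₖ (1 : Matrix (Fin K) (Fin K) ℂ)))
          * ((∑ m, X m ⊗ₖ ((Matrix.diagonal fun a => (ltm m a : ℂ))
                ⊗ₖ (1 : Matrix (Fin K) (Fin K) ℂ)))
              + (σ ^ 2 : ℂ) • (1 : Matrix (Fin B × Fin A × Fin K) (Fin B × Fin A × Fin K) ℂ))⁻¹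
          * ((Dᴴ * colVec x) ⊗ₖ ((Matrix.diagonal fun a => (lt a : ℂ))
              ⊗ₖ (1 : Matrix (Fin K) (Fin K) ℂ))))
      = (K : ℂ) * Matrix.trace
          (((rowVecH x * D) ⊗ₖ (Matrix.diagonal fun a => (lt a : ℂ)))
            * ((∑ m, X m ⊗ₖ (Matrix.diagonal fun a => (ltm m a : ℂ)))
                + (σ ^ 2 : ℂ) • (1 : Matrix (Fin B × Fin A) (Fin B × Fin A) ℂ))⁻¹
            * ((Dᴴ * colVec x) ⊗ₖ (Matrix.diagonal fun a => (lt a : ℂ)))) :=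
  subarray_trace_scaling_general B A K M X lt ltm σ D x
end

section
/- (Pilot Gram matrix property) Let x ∈ ℂ^B with |x_b|² = p for all b, δ ≥ 0, κ ≥ 0, and define X ∈ ℂ^{B×B} by X_{bb} = p(1+κ²) and X_{b₁b₂} = x_{b₁}\overline{x_{b₂}} e^{-δ|b₁-b₂|/2} for b₁ ≠ b₂. Then X is Hermitian positive semidefinite. -/
/-!
Write `r = e^{-δ/2} ∈ (0, 1]` and `D = diag x`. Since `|x_b|² = p`, the matrix is
`D (K + κ² I) D*`, where `K_{b₁b₂} = r^{|b₁-b₂|}` is the Kac–Murdock–Szegő matrix of an AR(1)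
process. `K` is a Gram matrix: `K = L Lᵀ` for the lower-triangular `L` whose row `i` is
`(r^i, s r^(i-1), …, s r, s, 0, …)` with `s = √(1 - r²)`, the innovations representation of the
AR(1) process. Hence `K + κ² I`, and with it its congruence by `D`, is positive semidefinite.
-/

open Matrix Finset
open scoped ComplexOrder

namespace Matrix

noncomputable def kmsFactor (r : ℝ) (i k : ℕ) : ℝ :=
  if k = 0 then r ^ i else if k ≤ i then √(1 - r ^ 2) * r ^ (i - k) else 0

section kmsFactor

variable {r : ℝ} {i j k : ℕ}

theorem kmsFactor_of_lt (h : i < k) : kmsFactor r i k = 0 := by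
  rw [kmsFactor, if_neg (by omega), if_neg (by omega)]

theorem kmsFactor_eq_pow_mul (hkj : k ≤ j) (hji : j ≤ i) :
    kmsFactor r i k = r ^ (i - j) * kmsFactor r j k := by
  unfold kmsFactor
  split_ifs with hk0 hki
  · rw [← pow_add, Nat.sub_add_cancel hji]
  · rw [mul_left_comm, ← pow_add, tsub_add_tsub_cancel hji hkj]
  · omega

theorem kmsFactor_mul_kmsFactor (hji : j ≤ i) :
    kmsFactor r i k * kmsFactor r j k = r ^ (i - j) * kmsFactor r j k ^ 2 := by
  rcases le_or_gt k j with hkj | hjk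
  · rw [kmsFactor_eq_pow_mul hkj hji]; ring
  · simp [kmsFactor_of_lt hjk]

theorem sum_range_succ_kmsFactor_sq (hr : r ^ 2 ≤ 1) (j : ℕ) :
    ∑ k ∈ range (j + 1), kmsFactor r j k ^ 2 = 1 := by
  induction j with
  | zero => simp [kmsFactor]
  | succ j ih =>
    have hrow : ∀ k ∈ range (j + 1), kmsFactor r (j + 1) k ^ 2 = r ^ 2 * kmsFactor r j k ^ 2 :=
      fun k hk => by
        rw [kmsFactor_eq_pow_mul (mem_range_succ_iff.mp hk) (by omega : j ≤ j + 1),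
          Nat.add_sub_cancel_left, pow_one, mul_pow]
    have hlast : kmsFactor r (j + 1) (j + 1) ^ 2 = 1 - r ^ 2 := by
      simp [kmsFactor, Real.sq_sqrt (sub_nonneg.mpr hr)]
    rw [sum_range_succ, sum_congr rfl hrow, ← mul_sum, ih, hlast]
    ring

theorem sum_range_kmsFactor_mul_kmsFactor (hr : r ^ 2 ≤ 1) {n : ℕ} (hi : i < n) (hj : j < n) :
    ∑ k ∈ range n, kmsFactor r i k * kmsFactor r j k = r ^ Nat.dist i j := by
  wlog hji : j ≤ i generalizing i j
  · rw [Nat.dist_comm, ← this hj hi (by omega)]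
    exact sum_congr rfl fun k _ => mul_comm _ _
  have htail : ∑ k ∈ range (j + 1), kmsFactor r j k ^ 2 = ∑ k ∈ range n, kmsFactor r j k ^ 2 :=
    sum_subset (range_subset_range.mpr hj) fun k hkn hkj => by
      rw [kmsFactor_of_lt (by simpa using hkj), zero_pow two_ne_zero]
  simp_rw [kmsFactor_mul_kmsFactor hji]
  rw [← mul_sum, ← htail, sum_range_succ_kmsFactor_sq hr, mul_one, Nat.dist_eq_sub_of_le_right hji]

end kmsFactor

noncomputable def kms (𝕜 : Type*) [RCLike 𝕜] (n : ℕ) (r : ℝ) : Matrix (Fin n) (Fin n) 𝕜 :=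
  of fun i j => ((r ^ Nat.dist i j : ℝ) : 𝕜)

variable {𝕜 : Type*} [RCLike 𝕜]

theorem kms_eq_mul_conjTranspose {n : ℕ} {r : ℝ} (hr : r ^ 2 ≤ 1) :
    kms 𝕜 n r = (of fun i k : Fin n => (kmsFactor r i k : 𝕜)) *
      (of fun i k : Fin n => (kmsFactor r i k : 𝕜))ᴴ := by
  ext i j
  simp only [kms, of_apply, mul_apply, conjTranspose_apply, RCLike.star_def, RCLike.conj_ofReal,
    ← RCLike.ofReal_mul, ← RCLike.ofReal_sum]
  rw [Fin.sum_univ_eq_sum_range (fun k => kmsFactor r i k * kmsFactor r j k),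
    sum_range_kmsFactor_mul_kmsFactor hr i.isLt j.isLt]

theorem posSemidef_kms {n : ℕ} {r : ℝ} (hr : r ^ 2 ≤ 1) : (kms 𝕜 n r).PosSemidef := by
  rw [kms_eq_mul_conjTranspose hr]
  exact posSemidef_self_mul_conjTranspose _

end Matrix

theorem Nat.cast_dist {R : Type*} [Ring R] [LinearOrder R] [IsStrictOrderedRing R] (i j : ℕ) :
    (Nat.dist i j : R) = |(i : R) - j| := by
  rcases le_total i j with h | h
  · rw [abs_sub_comm, abs_of_nonneg (by simpa using h), Nat.dist_eq_sub_of_le h, Nat.cast_sub h]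
  · rw [abs_of_nonneg (by simpa using h), Nat.dist_eq_sub_of_le_right h, Nat.cast_sub h]

theorem pilot_gram_eq_diagonal_mul_kms_mul (B : ℕ) (x : Fin B → ℂ) (p δ κ : ℝ)
    (hx : ∀ b, ‖x b‖ ^ 2 = p) :
    (Matrix.of fun b₁ b₂ : Fin B =>
        if b₁ = b₂ then ((p * (1 + κ ^ 2) : ℝ) : ℂ)
        else x b₁ * star (x b₂)
          * ((Real.exp (-δ * |(b₁ : ℝ) - (b₂ : ℝ)| / 2) : ℝ) : ℂ)) =
      diagonal x * (kms ℂ B (Real.exp (-δ / 2)) + κ ^ 2 • 1) * (diagonal x)ᴴ := by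
  ext b₁ b₂
  rw [diagonal_conjTranspose, mul_diagonal, diagonal_mul, of_apply, Matrix.add_apply,
    Matrix.smul_apply, kms, of_apply]
  by_cases h : b₁ = b₂
  · subst h
    rw [if_pos rfl, one_apply_eq, Nat.dist_self, pow_zero, Pi.star_apply, mul_right_comm,
      Complex.star_def, Complex.mul_conj', Complex.real_smul, mul_one, ← hx b₁]
    push_cast
    ring
  · have hexp :
        Real.exp (-δ * |(b₁ : ℝ) - (b₂ : ℝ)| / 2) = Real.exp (-δ / 2) ^ Nat.dist b₁ b₂ := by
      rw [← Nat.cast_dist, ← Real.exp_nat_mul]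
      ring_nf
    rw [if_neg h, one_apply_ne h, hexp, smul_zero, add_zero]
    exact mul_right_comm _ _ _

theorem pilot_gram_posSemidef_general
    (B : ℕ) (x : Fin B → ℂ) (p δ κ : ℝ)
    (hx : ∀ b, ‖x b‖ ^ 2 = p) (hδ : 0 ≤ δ) :
    (Matrix.of fun b₁ b₂ : Fin B =>
        if b₁ = b₂ then ((p * (1 + κ ^ 2) : ℝ) : ℂ)
        else x b₁ * star (x b₂)
          * ((Real.exp (-δ * |(b₁ : ℝ) - (b₂ : ℝ)| / 2) : ℝ) : ℂ)).PosSemidef := by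
  have hr : Real.exp (-δ / 2) ^ 2 ≤ 1 := by
    rw [← Real.exp_nat_mul, Real.exp_le_one_iff]
    linarith
  rw [pilot_gram_eq_diagonal_mul_kms_mul B x p δ κ hx]
  exact ((posSemidef_kms hr).add (PosSemidef.one.smul (sq_nonneg κ))).mul_mul_conjTranspose_same _

/-- The pilot Gram matrix `X` with `X_{bb} = p(1+κ²)` and
`X_{b₁b₂} = x_{b₁} conj(x_{b₂}) e^{-δ|b₁-b₂|/2}` for `b₁ ≠ b₂`, where `|x_b|² = p`,
is Hermitian positive semidefinite. -/
theorem pilot_gram_posSemidef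
    (B : ℕ) (x : Fin B → ℂ) (p δ κ : ℝ)
    (hx : ∀ b, ‖x b‖ ^ 2 = p) (hδ : 0 ≤ δ) (hκ : 0 ≤ κ) :
    (Matrix.of fun b₁ b₂ : Fin B =>
        if b₁ = b₂ then ((p * (1 + κ ^ 2) : ℝ) : ℂ)
        else x b₁ * star (x b₂)
          * ((Real.exp (-δ * |(b₁ : ℝ) - (b₂ : ℝ)| / 2) : ℝ) : ℂ)).PosSemidef :=
  pilot_gram_posSemidef_general B x p δ κ hx hδ
end
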